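/- Let p be a prime, let Φ_p = F_2/K_{2,p} with standard generators x̄, ȳ (the images of the free generators a, b). Then the endomorphism of F_2 determined by a ↦ b a b⁻¹, b ↦ a b a⁻¹ maps K_{2,p} into K_{2,p} and hence induces an endomorphism σ of Φ_p with σ(x̄) = ȳ x̄ ȳ⁻¹ and σ(ȳ) = x̄ ȳ x̄⁻¹; this σ is an automorphism of Φ_p, it is an IA-automorphism (σ(g)·g⁻¹ ∈ [Φ_p, Φ_p] for all g), and it is not an inner automorphism. In particular, IA(Φ_p) ≠ Inn(Φ_p). -/

import Mathlib

/-- The subgroup generated by all `n`-th powers of elements of `H`. -/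
def Subgroup.nthPowers {G : Type*} [Group G] (H : Subgroup G) (n : ℕ) : Subgroup G :=
  Subgroup.closure {x | ∃ h ∈ H, h ^ n = x}

/-- The subgroups `K_{r,n}`: `K_{0,n} = F` and `K_{r+1,n} = [K_{r,n},K_{r,n}]·(K_{r,n})^n`. -/
def Ksub (G : Type*) [Group G] (n : ℕ) : ℕ → Subgroup G
  | 0 => ⊤
  | r + 1 => ⁅Ksub G n r, Ksub G n r⁆ ⊔ (Ksub G n r).nthPowers n

lemma map_nthPowers {G G' : Type*} [Group G] [Group G'] (f : G →* G') (H : Subgroup G) (n : ℕ) :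
    (H.nthPowers n).map f = (H.map f).nthPowers n := by
  unfold Subgroup.nthPowers
  rw [MonoidHom.map_closure]
  congr 1
  ext x
  constructor
  · rintro ⟨y, ⟨h, hh, rfl⟩, rfl⟩
    exact ⟨f h, ⟨h, hh, rfl⟩, (map_pow f h n).symm⟩
  · rintro ⟨h', ⟨h, hh, rfl⟩, rfl⟩
    exact ⟨h ^ n, ⟨h, hh, rfl⟩, map_pow f h n⟩

lemma Ksub_map (G : Type*) [Group G] (n r : ℕ) (φ : G ≃* G) :
    (Ksub G n r).map φ.toMonoidHom = Ksub G n r := by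
  induction r with
  | zero => simpa [Ksub] using Subgroup.map_top_of_surjective _ φ.surjective
  | succ r ih =>
    show (⁅Ksub G n r, Ksub G n r⁆ ⊔ (Ksub G n r).nthPowers n).map φ.toMonoidHom = _
    rw [Subgroup.map_sup, Subgroup.map_commutator, map_nthPowers, ih]
    rfl

instance Ksub_characteristic (G : Type*) [Group G] (n r : ℕ) : (Ksub G n r).Characteristic :=
  Subgroup.characteristic_iff_map_eq.mpr fun φ => Ksub_map G n r φ


lemma derivedSeries_le_Ksub (G : Type*) [Group G] (n r : ℕ) :
    derivedSeries G r ≤ Ksub G n r := by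
  induction r with
  | zero => simp [Ksub]
  | succ r ih =>
    calc derivedSeries G (r + 1) = ⁅derivedSeries G r, derivedSeries G r⁆ := rfl
    _ ≤ ⁅Ksub G n r, Ksub G n r⁆ := Subgroup.commutator_mono ih ih
    _ ≤ _ := le_sup_left

/-!
Every homomorphism maps `K_{r,n}` into `K_{r,n}`, so `σ` is defined, and it is the identity
modulo commutators since it sends each generator to a conjugate. `Φ_p` is finite (`K_{r+1,n}` has
finite index in the finitely generated `K_{r,n}`) and has exponent `p²`, so it is a nilpotent
`p`-group. There `[G, G]` lies in the Frattini subgroup, so an endomorphism that is the identity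
modulo `[G, G]` is onto, hence bijective.

To see that `σ` is not inner, map `Φ_p` to `Q ⋉ 𝔽_p[Q]²` with `Q = (ℤ/p)²`, a group in which
`K_{2,p}` is trivial, by `a ↦ (x, 1, 0)`, `b ↦ (y, 0, 1)`. The image of any `h` satisfies the
fundamental formula of Fox calculus, and together with the Fox coordinates of
`h a h⁻¹ = b a b⁻¹` and `h b h⁻¹ = a b a⁻¹` it gives `h̄ + 1 = x + y` in `𝔽_p[Q]`, impossible as
`1`, `x`, `y` are distinct.
-/

namespace Subgroup

variable {G : Type*} [Group G]

lemma nthPowers_mono {H K : Subgroup G} (h : H ≤ K) (n : ℕ) : H.nthPowers n ≤ K.nthPowers n :=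
  closure_mono fun _ ⟨a, ha, hx⟩ => ⟨a, h ha, hx⟩

lemma nthPowers_le {H K : Subgroup G} {n : ℕ} (h : ∀ x ∈ H, x ^ n ∈ K) : H.nthPowers n ≤ K :=
  (closure_le _).2 <| by rintro x ⟨a, ha, rfl⟩; exact h a ha

lemma pow_mem_nthPowers {H : Subgroup G} (n : ℕ) {x : G} (hx : x ∈ H) : x ^ n ∈ H.nthPowers n :=
  subset_closure ⟨x, hx, rfl⟩

end Subgroup

section Ksub

lemma Ksub_zero (G : Type*) [Group G] (n : ℕ) : Ksub G n 0 = ⊤ := rfl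

lemma Ksub_succ (G : Type*) [Group G] (n r : ℕ) :
    Ksub G n (r + 1) = ⁅Ksub G n r, Ksub G n r⁆ ⊔ (Ksub G n r).nthPowers n := rfl

variable {G G' : Type*} [Group G] [Group G']

lemma Ksub_map_le (f : G →* G') (n r : ℕ) : (Ksub G n r).map f ≤ Ksub G' n r := by
  induction r with
  | zero => exact le_top
  | succ r ih =>
    rw [Ksub_succ, Ksub_succ, Subgroup.map_sup, Subgroup.map_commutator, map_nthPowers]
    exact sup_le_sup (Subgroup.commutator_mono ih ih) (Subgroup.nthPowers_mono ih n)

lemma Ksub_le_comap (f : G →* G') (n r : ℕ) : Ksub G n r ≤ (Ksub G' n r).comap f :=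
  Subgroup.map_le_iff_le_comap.1 (Ksub_map_le f n r)

variable {n : ℕ}

lemma commutator_le_Ksub_one : commutator G ≤ Ksub G n 1 := le_sup_left

lemma pow_pow_mem_Ksub (g : G) (r : ℕ) : g ^ n ^ r ∈ Ksub G n r := by
  induction r with
  | zero => trivial
  | succ r ih =>
    rw [pow_succ, pow_mul]
    exact Subgroup.mem_sup_right (Subgroup.pow_mem_nthPowers n ih)

lemma Ksub_succ_eq_map_Ksub_one (r : ℕ) :
    Ksub G n (r + 1) = (Ksub (Ksub G n r) n 1).map (Ksub G n r).subtype := by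
  rw [Ksub_succ, Ksub_succ, Subgroup.map_sup, Subgroup.map_commutator, map_nthPowers,
    Ksub_zero, ← MonoidHom.range_eq_map, Subgroup.range_subtype]

lemma Ksub_one_le_ker {A : Type*} [CommGroup A] (f : G →* A) (hA : ∀ a : A, a ^ n = 1) :
    Ksub G n 1 ≤ f.ker :=
  sup_le (Abelianization.commutator_subset_ker f)
    (Subgroup.nthPowers_le fun x _ => by rw [f.mem_ker, map_pow, hA])

lemma Ksub_succ_eq_bot {N : Subgroup G} {r : ℕ} (hN : Ksub G n r ≤ N)
    (hcomm : ∀ x ∈ N, ∀ y ∈ N, x * y = y * x) (hpow : ∀ x ∈ N, x ^ n = 1) :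
    Ksub G n (r + 1) = ⊥ := by
  refine le_bot_iff.1 (sup_le (Subgroup.commutator_le.2 fun x hx y hy => ?_)
    (Subgroup.nthPowers_le fun x hx => hpow x (hN hx)))
  rw [Subgroup.mem_bot, commutatorElement_eq_one_iff_mul_comm]
  exact hcomm x (hN hx) y (hN hy)

end Ksub

lemma isPGroup_quotient_Ksub (G : Type*) [Group G] (p r : ℕ) : IsPGroup p (G ⧸ Ksub G p r) :=
  fun g => QuotientGroup.induction_on g fun w =>
    ⟨r, (QuotientGroup.eq_one_iff _).2 (pow_pow_mem_Ksub w r)⟩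

section Finiteness

variable {G : Type*} [Group G] [Group.FG G] {n : ℕ}

lemma finite_quotient_of_commutator_le {K : Subgroup G} [K.Normal] (hn : n ≠ 0)
    (hcomm : commutator G ≤ K) (hpow : ∀ g : G, g ^ n ∈ K) : Finite (G ⧸ K) := by
  let _ : CommGroup (G ⧸ K) :=
    { mul_comm := fun a b => by
        induction a using QuotientGroup.induction_on with | H x => ?_
        induction b using QuotientGroup.induction_on with | H y => ?_
        rw [← commutatorElement_eq_one_iff_mul_comm]
        exact (map_commutatorElement (QuotientGroup.mk' K) x y).symm.trans <|
          (QuotientGroup.eq_one_iff _).2 <| hcomm <|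
            Subgroup.commutator_mem_commutator (Subgroup.mem_top x) (Subgroup.mem_top y) }
  refine CommGroup.finite_of_fg_isMulTorsion (G := G ⧸ K) fun a => ?_
  induction a using QuotientGroup.induction_on with | H g => ?_
  exact isOfFinOrder_iff_pow_eq_one.2
    ⟨n, n.pos_of_ne_zero hn, (QuotientGroup.eq_one_iff _).2 (hpow g)⟩

lemma Ksub_one_finiteIndex (hn : n ≠ 0) : (Ksub G n 1).FiniteIndex :=
  have := finite_quotient_of_commutator_le hn commutator_le_Ksub_one fun g : G => by
    simpa using pow_pow_mem_Ksub (n := n) g 1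
  Subgroup.finiteIndex_of_finite_quotient

lemma Ksub_finiteIndex (hn : n ≠ 0) (r : ℕ) : (Ksub G n r).FiniteIndex := by
  induction r with
  | zero => exact Ksub_zero G n ▸ inferInstance
  | succ r ih =>
    refine ⟨?_⟩
    rw [Ksub_succ_eq_map_Ksub_one, Subgroup.index_map_subtype]
    exact mul_ne_zero (Ksub_one_finiteIndex (G := Ksub G n r) hn).index_ne_zero ih.index_ne_zero

end Finiteness

section Nilpotent

variable {G : Type*} [Group G]

open scoped commutatorElement in
lemma IsCoatom.commutator_le {M : Subgroup G} [M.Normal] (hM : IsCoatom M) :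
    commutator G ≤ M := by
  refine Subgroup.commutator_le.2 fun a _ b _ => ?_
  by_cases ha : a ∈ M
  · exact Subgroup.commutator_le_left M ⊤ (Subgroup.commutator_mem_commutator ha trivial)
  have hsup : M ⊔ Subgroup.zpowers a = ⊤ :=
    hM.2 _ (lt_of_le_of_ne le_sup_left fun h => ha (h ▸ Subgroup.mem_sup_right
      (Subgroup.mem_zpowers a)))
  have hb : b ∈ ((M ⊔ Subgroup.zpowers a : Subgroup G) : Set G) := hsup ▸ Subgroup.mem_top b
  rw [Subgroup.normal_mul] at hb
  obtain ⟨m, hm, _, ⟨k, rfl⟩, rfl⟩ := hb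
  have : ⁅a, m * a ^ k⁆ = ⁅a, m⁆ := by simp only [commutatorElement_def]; group
  rw [this]
  exact Subgroup.commutator_le_right ⊤ M (Subgroup.commutator_mem_commutator trivial hm)

lemma commutator_le_frattini [Finite G] (hG : Group.IsNilpotent G) :
    commutator G ≤ frattini G := by
  have hnormal : ∀ M : Subgroup G, IsCoatom M → M.Normal :=
    ((Group.isNilpotent_of_finite_tfae (G := G)).out 0 2).1 hG
  exact le_iInf₂ fun M hM => have := hnormal M hM; hM.commutator_le

lemma MonoidHom.bijective_of_mul_inv_mem_commutator [Finite G] (hG : Group.IsNilpotent G)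
    (f : G →* G) (hf : ∀ g, f g * g⁻¹ ∈ commutator G) : Function.Bijective f := by
  have hrange : f.range ⊔ frattini G = ⊤ := eq_top_iff.2 fun g _ => by
    rw [show g = (f g * g⁻¹)⁻¹ * f g by group]
    exact mul_mem (Subgroup.mem_sup_right (inv_mem (commutator_le_frattini hG (hf g))))
      (Subgroup.mem_sup_left ⟨g, rfl⟩)
  have hsurj : Function.Surjective f := f.range_eq_top.1 (frattini_nongenerating hrange)
  exact ⟨Finite.injective_iff_surjective.2 hsurj, hsurj⟩

end Nilpotent

lemma mul_inv_mem_commutator_of_comp_eq {G : Type*} [Group G] {f : G →* G}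
    (hf : Abelianization.of.comp f = Abelianization.of) (g : G) : f g * g⁻¹ ∈ commutator G := by
  rw [← Abelianization.ker_of, MonoidHom.mem_ker, map_mul, map_inv, ← MonoidHom.comp_apply, hf,
    mul_inv_cancel]

/-- The semidirect product `Q ⋉ k[Q]²`, `Q` acting by left multiplication. A word `w` in two
generators is sent to `(w̄, ∂w/∂x, ∂w/∂y)` (Fox derivatives) by the Magnus embedding. -/
@[ext]
structure MagnusGroup (k Q : Type*) [CommRing k] [CommGroup Q] where
  q : Q
  a : MonoidAlgebra k Q
  b : MonoidAlgebra k Q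

noncomputable section

namespace MagnusGroup

variable {k Q : Type*} [CommRing k] [CommGroup Q]

local notation "ι" => MonoidAlgebra.of k Q

instance : Mul (MagnusGroup k Q) := ⟨fun u v => ⟨u.q * v.q, u.a + ι u.q * v.a, u.b + ι u.q * v.b⟩⟩
instance : One (MagnusGroup k Q) := ⟨⟨1, 0, 0⟩⟩
instance : Inv (MagnusGroup k Q) := ⟨fun u => ⟨u.q⁻¹, -(ι u.q⁻¹ * u.a), -(ι u.q⁻¹ * u.b)⟩⟩

@[simp] lemma mul_q (u v : MagnusGroup k Q) : (u * v).q = u.q * v.q := rfl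
@[simp] lemma mul_a (u v : MagnusGroup k Q) : (u * v).a = u.a + ι u.q * v.a := rfl
@[simp] lemma mul_b (u v : MagnusGroup k Q) : (u * v).b = u.b + ι u.q * v.b := rfl
@[simp] lemma one_q : (1 : MagnusGroup k Q).q = 1 := rfl
@[simp] lemma one_a : (1 : MagnusGroup k Q).a = 0 := rfl
@[simp] lemma one_b : (1 : MagnusGroup k Q).b = 0 := rfl
@[simp] lemma inv_q (u : MagnusGroup k Q) : u⁻¹.q = u.q⁻¹ := rfl
@[simp] lemma inv_a (u : MagnusGroup k Q) : u⁻¹.a = -(ι u.q⁻¹ * u.a) := rfl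
@[simp] lemma inv_b (u : MagnusGroup k Q) : u⁻¹.b = -(ι u.q⁻¹ * u.b) := rfl

instance : Group (MagnusGroup k Q) where
  mul_assoc u v w := by
    ext : 1 <;> simp [-MonoidAlgebra.of_apply, mul_add, mul_assoc, add_assoc]
  one_mul u := by ext : 1 <;> simp [-MonoidAlgebra.of_apply]
  mul_one u := by ext : 1 <;> simp
  inv_mul_cancel u := by ext : 1 <;> simp

def qHom : MagnusGroup k Q →* Q where
  toFun := q
  map_one' := rfl
  map_mul' _ _ := rfl

lemma Ksub_two_eq_bot {n : ℕ} (hQ : ∀ g : Q, g ^ n = 1) (hk : (n : k) = 0) :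
    Ksub (MagnusGroup k Q) n 2 = ⊥ := by
  have hker : ∀ u ∈ (qHom : MagnusGroup k Q →* Q).ker, u.q = 1 := fun u hu => hu
  refine Ksub_succ_eq_bot (Ksub_one_le_ker qHom hQ) (fun u hu v hv => ?_) fun u hu => ?_
  · ext : 1 <;> simp [-MonoidAlgebra.of_apply, hker u hu, hker v hv, add_comm]
  · have hpow : ∀ m : ℕ, u ^ m = ⟨1, m • u.a, m • u.b⟩ := fun m => by
      induction m with
      | zero => ext : 1 <;> simp
      | succ m ih => ext : 1 <;> simp [-MonoidAlgebra.of_apply, pow_succ, ih, hker u hu, add_mul]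
    ext : 1 <;> simp [hpow, ← Nat.cast_smul_eq_nsmul k, hk]

def genA (x : Q) : MagnusGroup k Q := ⟨x, 1, 0⟩
def genB (y : Q) : MagnusGroup k Q := ⟨y, 0, 1⟩

/-- The elements satisfying the fundamental formula of Fox calculus
`w - 1 = ∂w/∂x (x - 1) + ∂w/∂y (y - 1)`. -/
def foxSubgroup (x y : Q) : Subgroup (MagnusGroup k Q) where
  carrier := {u | u.a * (ι x - 1) + u.b * (ι y - 1) = ι u.q - 1}
  one_mem' := by simp [-MonoidAlgebra.of_apply]
  mul_mem' {u v} (hu : _ = _) (hv : _ = _) := by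
    change _ = _
    simp only [mul_a, mul_b, mul_q, map_mul]
    linear_combination hu + ι u.q * hv
  inv_mem' {u} (hu : _ = _) := by
    change _ = _
    have hc : ι u.q⁻¹ * ι u.q = 1 := by rw [← map_mul, inv_mul_cancel, map_one]
    simp only [inv_a, inv_b, inv_q]
    linear_combination -ι u.q⁻¹ * hu - hc

lemma genA_mem_foxSubgroup (x y : Q) : genA x ∈ foxSubgroup (k := k) x y := by
  change _ = _
  simp [genA]

lemma genB_mem_foxSubgroup (x y : Q) : genB y ∈ foxSubgroup (k := k) x y := by
  change _ = _
  simp [genB]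

lemma not_conj_eq_swap [Nontrivial k] {x y : Q} (hx : x ≠ 1) (hy : y ≠ 1) (hxy : x ≠ y)
    {h : MagnusGroup k Q} (hh : h ∈ foxSubgroup x y)
    (hA : h * genA x * h⁻¹ = genB y * genA x * (genB y)⁻¹)
    (hB : h * genB y * h⁻¹ = genA x * genB y * (genA x)⁻¹) : False := by
  have hfox : h.a * (ι x - 1) + h.b * (ι y - 1) = ι h.q - 1 := hh
  have hc : ι h.q * ι h.q⁻¹ = 1 := by rw [← map_mul, mul_inv_cancel, map_one]
  have hAa := congrArg a hA
  have hBb := congrArg b hB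
  simp only [mul_a, mul_b, mul_q, inv_a, inv_b, genA, genB, map_mul] at hAa hBb
  have key : ι h.q + ι 1 = ι x + ι y := by
    linear_combination hAa + hBb + hfox + (h.a * ι x + h.b * ι y) * hc + map_one ι
  simp only [MonoidAlgebra.of_apply] at key
  rcases (MonoidAlgebra.single_add_single_inj one_ne_zero one_ne_zero).1 key with
    ⟨-, h1⟩ | ⟨-, -, h1⟩ | ⟨-, -, h⟩
  exacts [hy h1.symm, hx h1.symm, hxy h]

end MagnusGroup

end

local notation "F₂" => FreeGroup (Fin 2)
local notation "Φ" n:max => FreeGroup (Fin 2) ⧸ Ksub (FreeGroup (Fin 2)) n 2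

open FreeGroup

noncomputable section

def conjSwap : F₂ →* F₂ := lift ![of 1 * of 0 * (of 1)⁻¹, of 0 * of 1 * (of 0)⁻¹]

variable (n : ℕ)

def conjSwapQuot : Φ n →* Φ n := QuotientGroup.map _ _ conjSwap (Ksub_le_comap conjSwap n 2)

lemma conjSwapQuot_mk (w : F₂) : conjSwapQuot n w = (conjSwap w : Φ n) := rfl

lemma conjSwapQuot_mul_inv_mem_commutator (g : Φ n) :
    conjSwapQuot n g * g⁻¹ ∈ commutator (Φ n) := by
  refine mul_inv_mem_commutator_of_comp_eq
    (QuotientGroup.monoidHom_ext _ (ext_hom _ _ fun i => ?_)) g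
  fin_cases i <;> simp [conjSwapQuot_mk, conjSwap]

lemma conjSwapQuot_bijective {p : ℕ} (hp : p.Prime) : Function.Bijective (conjSwapQuot p) :=
  have : Fact p.Prime := ⟨hp⟩
  have := Ksub_finiteIndex (G := F₂) hp.ne_zero 2
  (conjSwapQuot p).bijective_of_mul_inv_mem_commutator
    (isPGroup_quotient_Ksub F₂ p 2).isNilpotent (conjSwapQuot_mul_inv_mem_commutator p)

local notation "Q" => Multiplicative (ZMod n × ZMod n)

def magnus : F₂ →* MagnusGroup (ZMod n) Q :=
  lift ![MagnusGroup.genA (.ofAdd (1, 0)), MagnusGroup.genB (.ofAdd (0, 1))]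

lemma magnus_range_le_foxSubgroup :
    (magnus n).range ≤ MagnusGroup.foxSubgroup (.ofAdd (1, 0)) (.ofAdd (0, 1)) := by
  rw [magnus, range_lift_eq_closure, Subgroup.closure_le]
  rintro _ ⟨i, rfl⟩
  fin_cases i
  exacts [MagnusGroup.genA_mem_foxSubgroup _ _, MagnusGroup.genB_mem_foxSubgroup _ _]

lemma Ksub_le_ker_magnus : Ksub F₂ n 2 ≤ (magnus n).ker := by
  have hQ (g : Q) : g ^ n = 1 := by
    induction g using Multiplicative.rec with | ofAdd z => ?_
    rw [← ofAdd_nsmul, ← Nat.cast_smul_eq_nsmul (ZMod n), ZMod.natCast_self, zero_smul,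
      ofAdd_zero]
  simpa [MagnusGroup.Ksub_two_eq_bot hQ (ZMod.natCast_self n)] using Ksub_le_comap (magnus n) n 2

def magnusQuot : Φ n →* MagnusGroup (ZMod n) Q :=
  QuotientGroup.lift _ (magnus n) (Ksub_le_ker_magnus n)

lemma conjSwapQuot_not_inner (hn : n ≠ 1) :
    ¬∃ h : Φ n, ∀ g, conjSwapQuot n g = h * g * h⁻¹ := by
  rintro ⟨h, hh⟩
  have := ZMod.nontrivial_iff.2 hn
  induction h using QuotientGroup.induction_on with | H w => ?_
  have hA := congrArg (magnusQuot n) (hh (QuotientGroup.mk (of 0))).symm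
  have hB := congrArg (magnusQuot n) (hh (QuotientGroup.mk (of 1))).symm
  exact MagnusGroup.not_conj_eq_swap (by simp) (by simp) (by simp)
    (magnus_range_le_foxSubgroup n ⟨w, rfl⟩)
    (by simpa [magnusQuot, conjSwapQuot_mk, conjSwap, magnus] using hA)
    (by simpa [magnusQuot, conjSwapQuot_mk, conjSwap, magnus] using hB)

end

/-- For a prime `p`, the endomorphism of `F₂` given by `a ↦ b a b⁻¹`, `b ↦ a b a⁻¹` maps
`K_{2,p}` into itself and hence induces an endomorphism `σ` of `Φ_p = F₂/K_{2,p}` with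
`σ(x̄) = ȳ x̄ ȳ⁻¹` and `σ(ȳ) = x̄ ȳ x̄⁻¹`; this `σ` is an automorphism of `Φ_p`, it is an
IA-automorphism, and it is not inner. In particular `IA(Φ_p) ≠ Inn(Φ_p)`. -/
theorem exists_IA_not_inner (p : ℕ) (hp : p.Prime) :
    (∀ w ∈ Ksub (FreeGroup (Fin 2)) p 2,
      FreeGroup.lift
        ![FreeGroup.of 1 * FreeGroup.of 0 * (FreeGroup.of 1)⁻¹,
          FreeGroup.of 0 * FreeGroup.of 1 * (FreeGroup.of 0)⁻¹] w ∈
        Ksub (FreeGroup (Fin 2)) p 2) ∧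
    ∃ σ : MulAut (FreeGroup (Fin 2) ⧸ Ksub (FreeGroup (Fin 2)) p 2),
      σ (QuotientGroup.mk (FreeGroup.of 0)) =
          QuotientGroup.mk (FreeGroup.of 1) * QuotientGroup.mk (FreeGroup.of 0) *
            (QuotientGroup.mk (FreeGroup.of 1) :
              FreeGroup (Fin 2) ⧸ Ksub (FreeGroup (Fin 2)) p 2)⁻¹ ∧
      σ (QuotientGroup.mk (FreeGroup.of 1)) =
          QuotientGroup.mk (FreeGroup.of 0) * QuotientGroup.mk (FreeGroup.of 1) *
            (QuotientGroup.mk (FreeGroup.of 0) :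
              FreeGroup (Fin 2) ⧸ Ksub (FreeGroup (Fin 2)) p 2)⁻¹ ∧
      (∀ g, σ g * g⁻¹ ∈ commutator (FreeGroup (Fin 2) ⧸ Ksub (FreeGroup (Fin 2)) p 2)) ∧
      ¬∃ h : FreeGroup (Fin 2) ⧸ Ksub (FreeGroup (Fin 2)) p 2, ∀ g, σ g = h * g * h⁻¹ :=
  ⟨fun _ hw => Ksub_le_comap conjSwap p 2 hw, .ofBijective _ (conjSwapQuot_bijective hp),
    by simp [conjSwapQuot_mk, conjSwap], by simp [conjSwapQuot_mk, conjSwap],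
    conjSwapQuot_mul_inv_mem_commutator p, conjSwapQuot_not_inner p hp.one_lt.ne'⟩
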